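/- (Controlled classicalisation theorem) Let A = ((a_n, r_n)) be a redundancy-free abstract Swiss cheese with ρ(A) < ∞, let I be a nonempty subset of ℕ, and suppose ((K_n, M_n))_{n ∈ I} is an admissible collection of pairs with respect to A whose compact sets cover the error set of A, i.e. E(A) ⊆ ⋃_{n ∈ I} K_n. Then there exists a classical abstract Swiss cheese B = ((b_n, s_n)) with δ_1(B) ≥ δ_1(A) and X_B ⊆ X_A such that: (1) for every k ∈ S_A ∖ ⋃_{n ∈ I} H_A(U_n) there exists ℓ ∈ S_B with ball(b_ℓ, s_ℓ) = ball(a_k, r_k); and (2) ρ_{U_n}(B) ≤ ρ_{U_n}(A) for all n ∈ I. -/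

import Mathlib

open Metric Set

/-- An abstract Swiss cheese: a sequence `((a_n, r_n))_{n ≥ 0}` of centres `a n ∈ ℂ` and
non-negative radii `r n ∈ [0, ∞)`. -/
structure SwissCheese where
  a : ℕ → ℂ
  r : ℕ → ℝ
  r_nonneg : ∀ n, 0 ≤ r n

namespace SwissCheese

/-- The associated Swiss cheese set `X_A = closedBall(a₀, r₀) ∖ ⋃_{n ≥ 1} ball(a_n, r_n)`. -/
def cheeseSet (A : SwissCheese) : Set ℂ :=
  closedBall (A.a 0) (A.r 0) \ ⋃ n ∈ Set.Ici 1, ball (A.a n) (A.r n)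

/-- The significant index set `S_A = {n ≥ 1 : r_n > 0}`. -/
def sig (A : SwissCheese) : Set ℕ := {n | 1 ≤ n ∧ 0 < A.r n}

/-- The radius sum `ρ(A) = ∑_{n ≥ 1} r_n` is finite. -/
def RadSummable (A : SwissCheese) : Prop := Summable fun n => A.r (n + 1)

/-- The radius sum `ρ(A) = ∑_{n ≥ 1} r_n`. -/
noncomputable def radSum (A : SwissCheese) : ℝ := ∑' n, A.r (n + 1)

/-- The discrepancy `δ₁(A) = r₀ − ∑_{n ≥ 1} r_n`. -/
noncomputable def disc (A : SwissCheese) : ℝ := A.r 0 - A.radSum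

/-- `A` is classical: `ρ(A) < ∞`, `r₀ > 0`, each significant closed disk is contained in
`ball(a₀, r₀)`, and distinct significant closed disks are disjoint. -/
def IsClassical (A : SwissCheese) : Prop :=
  A.RadSummable ∧ 0 < A.r 0 ∧ ∀ k ∈ A.sig,
    closedBall (A.a k) (A.r k) ⊆ ball (A.a 0) (A.r 0) ∧
    ∀ l ∈ A.sig, l ≠ k → closedBall (A.a k) (A.r k) ∩ closedBall (A.a l) (A.r l) = ∅

/-- `A` is semiclassical: `ρ(A) < ∞`, `r₀ > 0`, each significant open disk is contained in
`ball(a₀, r₀)`, and distinct significant open disks are disjoint. -/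
def IsSemiclassical (A : SwissCheese) : Prop :=
  A.RadSummable ∧ 0 < A.r 0 ∧ ∀ k ∈ A.sig,
    ball (A.a k) (A.r k) ⊆ ball (A.a 0) (A.r 0) ∧
    ∀ l ∈ A.sig, l ≠ k → ball (A.a k) (A.r k) ∩ ball (A.a l) (A.r l) = ∅

/-- `A` is annular: `a₀ = a₁` and `r₀ > r₁ > 0`. -/
def IsAnnular (A : SwissCheese) : Prop := A.a 0 = A.a 1 ∧ A.r 1 < A.r 0 ∧ 0 < A.r 1

/-- The annular radius sum `ρ_ann(A) = ∑_{n ≥ 2} r_n`. -/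
noncomputable def annRadSum (A : SwissCheese) : ℝ := ∑' n, A.r (n + 2)

/-- The annular discrepancy `δ_ann(A) = r₀ − r₁ − 2 ∑_{n ≥ 2} r_n`. -/
noncomputable def annDisc (A : SwissCheese) : ℝ := A.r 0 - A.r 1 - 2 * A.annRadSum

/-- `A` is redundancy-free: every significant open disk meets `closedBall(a₀, r₀)`, and no
significant open disk is contained in another one. -/
def IsRedundancyFree (A : SwissCheese) : Prop :=
  ∀ k ∈ A.sig, (ball (A.a k) (A.r k) ∩ closedBall (A.a 0) (A.r 0)).Nonempty ∧
    ∀ l ∈ A.sig, l ≠ k → ¬ ball (A.a k) (A.r k) ⊆ ball (A.a l) (A.r l)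

/-- `H_A(U)`: the set of significant indices whose closed disk meets `U`. -/
def HSet (A : SwissCheese) (U : Set ℂ) : Set ℕ :=
  {n | n ∈ A.sig ∧ (closedBall (A.a n) (A.r n) ∩ U).Nonempty}

/-- `ρ_U(A) = ∑_{n ∈ H_A(U)} r_n`. -/
noncomputable def rhoU (A : SwissCheese) (U : Set ℂ) : ℝ := ∑' n : A.HSet U, A.r n

/-- The error set `E(A)`. -/
def errorSet (A : SwissCheese) : Set ℂ :=
  (⋃ m ∈ A.sig, ⋃ n ∈ A.sig, ⋃ _ : m ≠ n,
      closedBall (A.a m) (A.r m) ∩ closedBall (A.a n) (A.r n)) ∪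
    ⋃ n ∈ A.sig, (ball (A.a 0) (A.r 0))ᶜ ∩ closedBall (A.a n) (A.r n)

/-- A Swiss cheese set is compact. -/
instance (A : SwissCheese) : CompactSpace A.cheeseSet :=
  isCompact_iff_compactSpace.mp
    ((isCompact_closedBall _ _).diff (isOpen_biUnion fun _ _ => isOpen_ball))

end SwissCheese

/-- `U(K, M) = {z : dist(z, K) < M}`. -/
def UKM (K : Set ℂ) (M : ℝ) : Set ℂ := {z | Metric.infDist z K < M}

/-!
A *merging* of the holes of `A` groups `S_A` into clusters, each covered by a closed disk whose
radius is at most the sum of the radii in the cluster, every cluster being either a single untouched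
hole or contained in some `H_A(U_n)` with its disk meeting `K_n`. Such a disk has radius at most
`ρ_{U_n}(A) < M_n / 2`, so it lies in `U_n`; as the `U_n` are disjoint, a cluster whose disk meets
`U_n` lies in `H_A(U_n)`. Ordering mergings by coarsening the clusters and enlarging the disks,
a chain is bounded by the union of its partitions together with limit disks obtained from
Cantor's intersection theorem, so Zorn's lemma gives a maximal merging. Its disks are pairwise
disjoint: two meeting disks can be replaced by one disk whose radius is the sum of theirs (two
meeting untouched holes meet in the error set, hence in some `K_n`). The cheese whose holes are
these disks is the required `B`.
-/

open scoped ENNReal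

section ClosedBall

variable {E : Type*} [NormedAddCommGroup E] [NormedSpace ℝ E]

theorem dist_add_le_of_closedBall_subset_closedBall [Nontrivial E] {x y : E} {r s : ℝ}
    (hr : 0 ≤ r) (h : closedBall x r ⊆ closedBall y s) : dist x y + r ≤ s := by
  rcases eq_or_ne x y with rfl | hxy
  · obtain ⟨w, hw⟩ := exists_norm_eq E hr
    simpa [hw] using h (show x + w ∈ closedBall x r by simp [hw])
  · have hd : 0 < dist x y := dist_pos.2 hxy
    have hu : AffineMap.lineMap y x (1 + r / dist x y) ∈ closedBall x r := by
      rw [mem_closedBall, dist_lineMap_right, dist_comm y x, sub_add_cancel_left, norm_neg,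
        Real.norm_of_nonneg (by positivity), div_mul_cancel₀ _ hd.ne']
    have := mem_closedBall.1 (h hu)
    rwa [dist_lineMap_left, dist_comm y x, Real.norm_of_nonneg (by positivity), add_mul, one_mul,
      div_mul_cancel₀ _ hd.ne'] at this

theorem exists_closedBall_superset_of_inter_nonempty {x y : E} {r s : ℝ} (hr : 0 ≤ r)
    (hs : 0 ≤ s) (h : (closedBall x r ∩ closedBall y s).Nonempty) :
    ∃ z, closedBall x r ∪ closedBall y s ⊆ closedBall z (r + s) := by
  obtain ⟨w, hwx, hwy⟩ := h
  have hd : dist x y ≤ r + s := by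
    linarith [dist_triangle x w y, mem_closedBall'.1 hwx, mem_closedBall.1 hwy]
  rcases (add_nonneg hr hs).eq_or_lt with hrs | hrs
  · refine ⟨x, union_subset (closedBall_subset_closedBall (by linarith))
      (closedBall_subset_closedBall' ?_)⟩
    linarith [dist_comm x y]
  refine ⟨AffineMap.lineMap x y (s / (r + s)), union_subset (closedBall_subset_closedBall' ?_)
    (closedBall_subset_closedBall' ?_)⟩
  · rw [dist_comm, dist_lineMap_left, Real.norm_of_nonneg (by positivity)]
    have : s / (r + s) * dist x y ≤ s := by
      rw [div_mul_eq_mul_div, div_le_iff₀ hrs]; nlinarith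
    linarith
  · rw [dist_comm, dist_lineMap_right, show 1 - s / (r + s) = r / (r + s) by field_simp; ring,
      Real.norm_of_nonneg (by positivity)]
    have : r / (r + s) * dist x y ≤ r := by
      rw [div_mul_eq_mul_div, div_le_iff₀ hrs]; nlinarith
    linarith

theorem exists_closedBall_superset_of_directed [Nontrivial E] [ProperSpace E] {ι : Type*}
    [Nonempty ι] {c : ι → E} {t : ι → ℝ} {T : ℝ} (ht : ∀ i, 0 ≤ t i) (hT : ∀ i, t i ≤ T)
    (hd : Directed (· ⊆ ·) fun i => closedBall (c i) (t i)) :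
    ∃ z, ∀ i, closedBall (c i) (t i) ⊆ closedBall z T := by
  -- `closedBall (c i) (T - t i)` is the set of centres of the balls of radius `T` containing
  -- the `i`-th ball
  have hdir : Directed (· ⊇ ·) fun i => closedBall (c i) (T - t i) := fun i j => by
    obtain ⟨k, hik, hjk⟩ := hd i j
    refine ⟨k, closedBall_subset_closedBall' ?_, closedBall_subset_closedBall' ?_⟩
    · linarith [dist_add_le_of_closedBall_subset_closedBall (ht i) hik, dist_comm (c i) (c k)]
    · linarith [dist_add_le_of_closedBall_subset_closedBall (ht j) hjk, dist_comm (c j) (c k)]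
  obtain ⟨z, hz⟩ := IsCompact.nonempty_iInter_of_directed_nonempty_isCompact_isClosed _ hdir
    (fun i => nonempty_closedBall.2 (sub_nonneg.2 (hT i))) (fun _ => isCompact_closedBall _ _)
    fun _ => isClosed_closedBall
  refine ⟨z, fun i => closedBall_subset_closedBall' ?_⟩
  linarith [mem_closedBall.1 (mem_iInter.1 hz i), dist_comm z (c i)]

end ClosedBall

theorem summable_and_tsum_le_of_tsum_ofReal_le {ι κ : Type*} {f : ι → ℝ} {g : κ → ℝ}
    (hf : ∀ i, 0 ≤ f i) (hg : ∀ k, 0 ≤ g k) (hgs : Summable g)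
    (h : ∑' i, ENNReal.ofReal (f i) ≤ ∑' k, ENNReal.ofReal (g k)) :
    Summable f ∧ ∑' i, f i ≤ ∑' k, g k := by
  rw [← ENNReal.ofReal_tsum_of_nonneg hg hgs] at h
  have hfs : Summable f := by
    simpa only [ENNReal.toReal_ofReal (hf _)] using
      ENNReal.summable_toReal (ne_top_of_le_ne_top ENNReal.ofReal_ne_top h)
  refine ⟨hfs, ?_⟩
  rwa [← ENNReal.ofReal_tsum_of_nonneg hf hfs, ENNReal.ofReal_le_ofReal_iff (tsum_nonneg hg)] at h

section UKM

variable {K : Set ℂ} {M : ℝ}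

theorem subset_UKM (hM : 0 < M) : K ⊆ UKM K M := fun z hz => by
  simpa [UKM, infDist_zero_of_mem hz] using hM

theorem UKM_nonempty (hM : 0 < M) : (UKM K M).Nonempty := by
  rcases K.eq_empty_or_nonempty with rfl | ⟨z, hz⟩
  · exact ⟨0, by simpa [UKM] using hM⟩
  · exact ⟨z, subset_UKM hM hz⟩

theorem closedBall_subset_UKM {c : ℂ} {t : ℝ} (hK : (closedBall c t ∩ K).Nonempty)
    (ht : 2 * t < M) : closedBall c t ⊆ UKM K M := by
  obtain ⟨z, hzc, hzK⟩ := hK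
  intro w hw
  calc infDist w K ≤ dist w z := infDist_le_dist_of_mem hzK
    _ ≤ dist w c + dist z c := dist_triangle_right _ _ _
    _ < M := by linarith [mem_closedBall.1 hw, mem_closedBall.1 hzc]

end UKM

namespace SwissCheese

variable (A : SwissCheese) {k l : ℕ}

theorem ne_zero_of_mem_sig (hk : k ∈ A.sig) : k ≠ 0 := Nat.one_le_iff_ne_zero.1 hk.1

theorem HSet_univ : A.HSet univ = A.sig := by
  ext k
  simp [HSet, A.r_nonneg k]

theorem rhoU_nonneg (U : Set ℂ) : 0 ≤ A.rhoU U := tsum_nonneg fun _ => A.r_nonneg _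

theorem indicator_sig_r_succ (n : ℕ) : A.sig.indicator A.r (n + 1) = A.r (n + 1) := by
  by_cases hn : n + 1 ∈ A.sig
  · exact indicator_of_mem hn _
  · rw [indicator_of_notMem hn]
    exact (le_antisymm (not_lt.1 fun h => hn ⟨Nat.le_add_left 1 n, h⟩) (A.r_nonneg _)).symm

theorem radSummable_iff : A.RadSummable ↔ Summable fun k : A.sig => A.r k := by
  have h : Summable (A.sig.indicator A.r ∘ Nat.succ) ↔ Summable (A.sig.indicator A.r) := by
    refine Nat.succ_injective.summable_iff fun k hk => indicator_of_notMem ?_ _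
    rintro ⟨hk1, -⟩
    exact hk ⟨k - 1, Nat.sub_add_cancel hk1⟩
  rw [RadSummable, ← funext A.indicator_sig_r_succ]
  exact h.trans summable_subtype_iff_indicator.symm

theorem radSum_eq_rhoU_univ : A.radSum = A.rhoU univ := by
  rw [radSum, rhoU, HSet_univ, tsum_subtype, ← funext A.indicator_sig_r_succ]
  refine Nat.succ_injective.tsum_eq fun k hk => ?_
  obtain ⟨hk1, -⟩ := support_indicator_subset hk
  exact ⟨k - 1, Nat.sub_add_cancel hk1⟩

theorem summable_r (hsum : A.RadSummable) : Summable A.r := (summable_nat_add_iff 1).1 hsum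

/-- `∑_{k ∈ s} r_k`, computed in `ℝ≥0∞` so that it makes sense without summability. -/
noncomputable def radSumOn (s : Set ℕ) : ℝ≥0∞ := ∑' k : s, ENNReal.ofReal (A.r k)

variable {A}

theorem radSumOn_mono {s t : Set ℕ} (h : s ⊆ t) : A.radSumOn s ≤ A.radSumOn t :=
  ENNReal.tsum_mono_subtype (fun k => ENNReal.ofReal (A.r k)) h

theorem radSumOn_union {s t : Set ℕ} (h : Disjoint s t) :
    A.radSumOn (s ∪ t) = A.radSumOn s + A.radSumOn t :=
  ENNReal.summable.tsum_union_disjoint (f := fun k => ENNReal.ofReal (A.r k)) h ENNReal.summable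

theorem radSumOn_ne_top (hsum : A.RadSummable) (s : Set ℕ) : A.radSumOn s ≠ ⊤ := by
  refine ne_top_of_le_ne_top ?_ (ENNReal.tsum_comp_le_tsum_of_injective
    (Subtype.val_injective (p := (· ∈ s))) fun k => ENNReal.ofReal (A.r k))
  rw [← ENNReal.ofReal_tsum_of_nonneg A.r_nonneg (A.summable_r hsum)]
  exact ENNReal.ofReal_ne_top

theorem ofReal_rhoU (hsum : A.RadSummable) (U : Set ℂ) :
    ENNReal.ofReal (A.rhoU U) = A.radSumOn (A.HSet U) :=
  ENNReal.ofReal_tsum_of_nonneg (fun _ => A.r_nonneg _) ((A.summable_r hsum).subtype _)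

theorem mem_errorSet_of_mem_inter {z : ℂ} (hk : k ∈ A.sig) (hl : l ∈ A.sig)
    (hkl : k ≠ l) (hz : z ∈ closedBall (A.a k) (A.r k) ∩ closedBall (A.a l) (A.r l)) :
    z ∈ A.errorSet :=
  Or.inl (mem_biUnion hk (mem_biUnion hl (mem_iUnion.2 ⟨hkl, hz⟩)))

theorem mem_errorSet_of_notMem_ball {z : ℂ} (hk : k ∈ A.sig)
    (hz : z ∈ closedBall (A.a k) (A.r k)) (hz0 : z ∉ ball (A.a 0) (A.r 0)) : z ∈ A.errorSet :=
  Or.inr (mem_biUnion hk ⟨hz0, hz⟩)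

def fibre (A : SwissCheese) (rep : ℕ → ℕ) (j : ℕ) : Set ℕ := {k | k ∈ A.sig ∧ rep k = j}

theorem fibre_id (hk : k ∈ A.sig) : A.fibre id k = {k} := by
  ext l
  exact ⟨fun hl => hl.2, fun hl => ⟨hl ▸ hk, hl⟩⟩

theorem radSumOn_singleton (k : ℕ) : A.radSumOn {k} = ENNReal.ofReal (A.r k) :=
  tsum_singleton k fun l => ENNReal.ofReal (A.r l)

theorem pairwiseDisjoint_fibre (rep : ℕ → ℕ) (S : Set ℕ) : S.PairwiseDisjoint (A.fibre rep) :=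
  fun _ _ _ _ hij => disjoint_left.2 fun _ hk hk' => hij (hk.2.symm.trans hk'.2)

structure IsAdmissible (A : SwissCheese) (I : Set ℕ) (K : ℕ → Set ℂ) (M : ℕ → ℝ) : Prop where
  rhoU_lt : ∀ n ∈ I, A.rhoU (UKM (K n) (M n)) < M n / 2
  disjoint : ∀ m ∈ I, ∀ n ∈ I, m ≠ n → UKM (K m) (M m) ∩ UKM (K n) (M n) = ∅
  closure_subset : ∀ n ∈ I, closure (UKM (K n) (M n)) ⊆ ball (A.a 0) (A.r 0)

variable {I : Set ℕ} {K : ℕ → Set ℂ} {M : ℕ → ℝ} {n : ℕ}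

theorem IsAdmissible.pos (hadm : A.IsAdmissible I K M) (hn : n ∈ I) : 0 < M n := by
  linarith [hadm.rhoU_lt n hn, A.rhoU_nonneg (UKM (K n) (M n))]

theorem IsAdmissible.UKM_subset_ball (hadm : A.IsAdmissible I K M) (hn : n ∈ I) :
    UKM (K n) (M n) ⊆ ball (A.a 0) (A.r 0) :=
  subset_closure.trans (hadm.closure_subset n hn)

theorem IsAdmissible.r_zero_pos (hadm : A.IsAdmissible I K M) (hI : I.Nonempty) : 0 < A.r 0 :=
  let ⟨_, hn⟩ := hI
  nonempty_ball.1 ((UKM_nonempty (hadm.pos hn)).mono (hadm.UKM_subset_ball hn))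

theorem IsAdmissible.eq_of_inter_nonempty (hadm : A.IsAdmissible I K M) {m : ℕ} (hm : m ∈ I)
    (hn : n ∈ I) (h : (UKM (K m) (M m) ∩ UKM (K n) (M n)).Nonempty) : m = n := by
  by_contra hmn
  simp [hadm.disjoint m hm n hn hmn] at h

theorem IsAdmissible.closedBall_subset_ball (hadm : A.IsAdmissible I K M)
    (hcover : A.errorSet ⊆ ⋃ n ∈ I, K n) (hk : k ∈ A.sig) :
    closedBall (A.a k) (A.r k) ⊆ ball (A.a 0) (A.r 0) := fun z hz => by
  by_contra hz0
  obtain ⟨n, hn, hzK⟩ := mem_iUnion₂.1 (hcover (A.mem_errorSet_of_notMem_ball hk hz hz0))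
  exact hz0 (hadm.UKM_subset_ball hn (subset_UKM (hadm.pos hn) hzK))

/-- The significant holes of `A` grouped into clusters: `rep k` is the representative of the
cluster of `k`, and the cluster with representative `j` is covered by
`closedBall (center j) (radius j)`. Values outside `S_A` play no role. -/
structure Merging (A : SwissCheese) (I : Set ℕ) (K : ℕ → Set ℂ) (M : ℕ → ℝ) where
  rep : ℕ → ℕ
  center : ℕ → ℂ
  radius : ℕ → ℝ
  rep_mem : ∀ k ∈ A.sig, rep k ∈ A.sig
  rep_rep : ∀ k ∈ A.sig, rep (rep k) = rep k
  closedBall_subset : ∀ k ∈ A.sig,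
    closedBall (A.a k) (A.r k) ⊆ closedBall (center (rep k)) (radius (rep k))
  radius_le : ∀ k ∈ A.sig, ENNReal.ofReal (radius (rep k)) ≤ A.radSumOn (A.fibre rep (rep k))
  untouched_or_merged : ∀ k ∈ A.sig,
    (A.fibre rep (rep k) = {rep k} ∧ center (rep k) = A.a (rep k) ∧ radius (rep k) = A.r (rep k)) ∨
    ∃ n ∈ I, (closedBall (center (rep k)) (radius (rep k)) ∩ K n).Nonempty ∧
      A.fibre rep (rep k) ⊆ A.HSet (UKM (K n) (M n))

namespace Merging

section

variable (σ : Merging A I K M) {j j' : ℕ}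

def disk (k : ℕ) : Set ℂ := closedBall (σ.center (σ.rep k)) (σ.radius (σ.rep k))

def reps : Set ℕ := {j | j ∈ A.sig ∧ σ.rep j = j}

theorem rep_mem_reps (hk : k ∈ A.sig) : σ.rep k ∈ σ.reps := ⟨σ.rep_mem k hk, σ.rep_rep k hk⟩

theorem mem_fibre_rep (hk : k ∈ A.sig) : k ∈ A.fibre σ.rep (σ.rep k) := ⟨hk, rfl⟩

theorem disk_eq_of_rep_eq {l : ℕ} (h : σ.rep k = σ.rep l) : σ.disk k = σ.disk l := by
  rw [disk, disk, h]

theorem disk_of_mem_reps (hj : j ∈ σ.reps) : σ.disk j = closedBall (σ.center j) (σ.radius j) := by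
  rw [disk, hj.2]

theorem r_le_radius (hk : k ∈ A.sig) : A.r k ≤ σ.radius (σ.rep k) := by
  linarith [dist_add_le_of_closedBall_subset_closedBall (A.r_nonneg k) (σ.closedBall_subset k hk),
    dist_nonneg (x := A.a k) (y := σ.center (σ.rep k))]

theorem radius_nonneg (hk : k ∈ A.sig) : 0 ≤ σ.radius (σ.rep k) :=
  (A.r_nonneg k).trans (σ.r_le_radius hk)

theorem r_le_radius_of_mem_reps (hj : j ∈ σ.reps) : A.r j ≤ σ.radius j := by
  simpa only [hj.2] using σ.r_le_radius hj.1

theorem radius_nonneg_of_mem_reps (hj : j ∈ σ.reps) : 0 ≤ σ.radius j :=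
  (A.r_nonneg j).trans (σ.r_le_radius_of_mem_reps hj)

theorem radius_le_of_mem_reps (hj : j ∈ σ.reps) :
    ENNReal.ofReal (σ.radius j) ≤ A.radSumOn (A.fibre σ.rep j) := hj.2 ▸ σ.radius_le j hj.1

theorem ofReal_radius_le_radSumOn_sig (hk : k ∈ A.sig) :
    ENNReal.ofReal (σ.radius (σ.rep k)) ≤ A.radSumOn A.sig :=
  (σ.radius_le k hk).trans (radSumOn_mono fun _ hl => hl.1)

theorem tsum_radius_le {S W : Set ℕ} (hS : S ⊆ σ.reps) (hW : ∀ j ∈ S, A.fibre σ.rep j ⊆ W) :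
    ∑' j : S, ENNReal.ofReal (σ.radius j) ≤ A.radSumOn W :=
  calc ∑' j : S, ENNReal.ofReal (σ.radius j)
      ≤ ∑' j : S, A.radSumOn (A.fibre σ.rep j) :=
        ENNReal.tsum_le_tsum fun j => σ.radius_le_of_mem_reps (hS j.2)
    _ = A.radSumOn (⋃ j ∈ S, A.fibre σ.rep j) :=
        (ENNReal.tsum_biUnion' (f := fun k => ENNReal.ofReal (A.r k))
          (pairwiseDisjoint_fibre σ.rep S)).symm
    _ ≤ A.radSumOn W := radSumOn_mono (iUnion₂_subset hW)

instance : Preorder (Merging A I K M) where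
  le σ τ := (∀ k ∈ A.sig, ∀ l ∈ A.sig, σ.rep k = σ.rep l → τ.rep k = τ.rep l) ∧
    ∀ k ∈ A.sig, σ.disk k ⊆ τ.disk k
  le_refl _ := ⟨fun _ _ _ _ h => h, fun _ _ => subset_rfl⟩
  le_trans _ _ _ h h' := ⟨fun k hk l hl he => h'.1 k hk l hl (h.1 k hk l hl he),
    fun k hk => (h.2 k hk).trans (h'.2 k hk)⟩

def initial : Merging A I K M where
  rep := id
  center := A.a
  radius := A.r
  rep_mem _ hk := hk
  rep_rep _ _ := rfl
  closedBall_subset _ _ := subset_rfl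
  radius_le k hk := by rw [id_eq, fibre_id hk, radSumOn_singleton]
  untouched_or_merged _ hk := Or.inl ⟨fibre_id hk, rfl, rfl⟩

instance : Nonempty (Merging A I K M) := ⟨initial⟩

theorem disk_subset_UKM (hsum : A.RadSummable) (hadm : A.IsAdmissible I K M) (hk : k ∈ A.sig)
    (hn : n ∈ I) (hK : (σ.disk k ∩ K n).Nonempty)
    (hH : A.fibre σ.rep (σ.rep k) ⊆ A.HSet (UKM (K n) (M n))) :
    σ.disk k ⊆ UKM (K n) (M n) := by
  refine closedBall_subset_UKM hK ?_
  have : σ.radius (σ.rep k) ≤ A.rhoU (UKM (K n) (M n)) := by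
    rw [← ENNReal.ofReal_le_ofReal_iff (A.rhoU_nonneg _), A.ofReal_rhoU hsum]
    exact (σ.radius_le k hk).trans (radSumOn_mono hH)
  linarith [hadm.rhoU_lt n hn]

theorem fibre_subset_HSet (hsum : A.RadSummable) (hadm : A.IsAdmissible I K M) (hk : k ∈ A.sig)
    (hn : n ∈ I) (hU : (σ.disk k ∩ UKM (K n) (M n)).Nonempty) :
    A.fibre σ.rep (σ.rep k) ⊆ A.HSet (UKM (K n) (M n)) := by
  rcases σ.untouched_or_merged k hk with ⟨hfib, hc, hr⟩ | ⟨m, hm, hK, hH⟩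
  · rw [hfib, singleton_subset_iff]
    exact ⟨σ.rep_mem k hk, by rwa [disk, hc, hr] at hU⟩
  · obtain rfl : m = n := hadm.eq_of_inter_nonempty hm hn
      (hU.mono (inter_subset_inter_left _ (σ.disk_subset_UKM hsum hadm hk hm hK hH)))
    exact hH

theorem disk_subset_UKM_of_inter (hsum : A.RadSummable) (hadm : A.IsAdmissible I K M)
    (hk : k ∈ A.sig) (hn : n ∈ I) (hK : (σ.disk k ∩ K n).Nonempty) :
    σ.disk k ⊆ UKM (K n) (M n) :=
  σ.disk_subset_UKM hsum hadm hk hn hK (σ.fibre_subset_HSet hsum hadm hk hn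
    (hK.mono (inter_subset_inter_right _ (subset_UKM (hadm.pos hn)))))

theorem disk_subset_ball (hsum : A.RadSummable) (hadm : A.IsAdmissible I K M)
    (hcover : A.errorSet ⊆ ⋃ n ∈ I, K n) (hk : k ∈ A.sig) :
    σ.disk k ⊆ ball (A.a 0) (A.r 0) := by
  rcases σ.untouched_or_merged k hk with ⟨-, hc, hr⟩ | ⟨m, hm, hK, hH⟩
  · rw [disk, hc, hr]
    exact hadm.closedBall_subset_ball hcover (σ.rep_mem k hk)
  · exact (σ.disk_subset_UKM hsum hadm hk hm hK hH).trans (hadm.UKM_subset_ball hm)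

theorem untouched_of_forall_not_inter (hk : k ∈ A.sig)
    (h : ∀ n ∈ I, ¬ (σ.disk k ∩ K n).Nonempty) :
    σ.rep k = k ∧ A.fibre σ.rep k = {k} ∧ σ.center k = A.a k ∧ σ.radius k = A.r k := by
  obtain ⟨hfib, hc, hr⟩ :=
    (σ.untouched_or_merged k hk).resolve_right fun ⟨n, hn, hK, _⟩ => h n hn hK
  have hrep : σ.rep k = k := (hfib ▸ σ.mem_fibre_rep hk : k ∈ ({σ.rep k} : Set ℕ)).symm
  rw [hrep] at hfib hc hr
  exact ⟨hrep, hfib, hc, hr⟩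

def mergeRep (rep : ℕ → ℕ) (j j' : ℕ) (k : ℕ) : ℕ := if rep k = j' then j else rep k

theorem mergeRep_cases (rep : ℕ → ℕ) (j j' k : ℕ) :
    (mergeRep rep j j' k = j ∧ (rep k = j ∨ rep k = j')) ∨
      (mergeRep rep j j' k = rep k ∧ rep k ≠ j ∧ rep k ≠ j') := by
  unfold mergeRep
  by_cases h' : rep k = j'
  · exact Or.inl ⟨if_pos h', Or.inr h'⟩
  · by_cases h : rep k = j
    · exact Or.inl ⟨by rw [if_neg h', h], Or.inl h⟩
    · exact Or.inr ⟨if_neg h', h, h'⟩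

theorem fibre_mergeRep_self {rep : ℕ → ℕ} (hjj' : j ≠ j') :
    A.fibre (mergeRep rep j j') j = A.fibre rep j ∪ A.fibre rep j' := by
  ext k
  by_cases h' : rep k = j' <;> simp [fibre, mergeRep, h', Ne.symm hjj']

theorem fibre_mergeRep_of_ne {rep : ℕ → ℕ} {i : ℕ} (hi : i ≠ j) (hi' : i ≠ j') :
    A.fibre (mergeRep rep j j') i = A.fibre rep i := by
  ext k
  by_cases h' : rep k = j' <;> simp [fibre, mergeRep, h', Ne.symm hi, Ne.symm hi']

theorem disk_subset_merged {z : ℂ} (hz : closedBall (σ.center j) (σ.radius j) ∪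
      closedBall (σ.center j') (σ.radius j') ⊆ closedBall z (σ.radius j + σ.radius j'))
    (k : ℕ) :
    σ.disk k ⊆ closedBall (Function.update σ.center j z (mergeRep σ.rep j j' k))
      (Function.update σ.radius j (σ.radius j + σ.radius j') (mergeRep σ.rep j j' k)) := by
  rcases mergeRep_cases σ.rep j j' k with ⟨h, hk | hk⟩ | ⟨h, hk, -⟩ <;>
    rw [h, disk]
  · simpa only [hk, Function.update_self] using subset_union_left.trans hz
  · simpa only [hk, Function.update_self] using subset_union_right.trans hz
  · simp only [Function.update_of_ne hk, subset_rfl]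

def merge (hj : j ∈ σ.reps) (hj' : j' ∈ σ.reps) (hjj' : j ≠ j') (z : ℂ)
    (hz : closedBall (σ.center j) (σ.radius j) ∪ closedBall (σ.center j') (σ.radius j') ⊆
      closedBall z (σ.radius j + σ.radius j'))
    (hn : ∃ n ∈ I, (closedBall z (σ.radius j + σ.radius j') ∩ K n).Nonempty ∧
      A.fibre σ.rep j ∪ A.fibre σ.rep j' ⊆ A.HSet (UKM (K n) (M n))) :
    Merging A I K M where
  rep := mergeRep σ.rep j j'
  center := Function.update σ.center j z
  radius := Function.update σ.radius j (σ.radius j + σ.radius j')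
  rep_mem k hk := by
    rcases mergeRep_cases σ.rep j j' k with ⟨h, -⟩ | ⟨h, -⟩ <;> rw [h]
    exacts [hj.1, σ.rep_mem k hk]
  rep_rep k hk := by
    rcases mergeRep_cases σ.rep j j' k with ⟨h, -⟩ | ⟨h, -, h'⟩ <;> rw [h]
    · simp [mergeRep, hj.2, hjj']
    · simp [mergeRep, σ.rep_rep k hk, h']
  closedBall_subset k hk := (σ.closedBall_subset k hk).trans (σ.disk_subset_merged hz k)
  radius_le k hk := by
    rcases mergeRep_cases σ.rep j j' k with ⟨h, -⟩ | ⟨h, hne, hne'⟩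
    · rw [h, Function.update_self, fibre_mergeRep_self hjj',
        radSumOn_union ((pairwiseDisjoint_fibre σ.rep univ) trivial trivial hjj')]
      exact ENNReal.ofReal_add_le.trans
        (add_le_add (σ.radius_le_of_mem_reps hj) (σ.radius_le_of_mem_reps hj'))
    · rw [h, Function.update_of_ne hne, fibre_mergeRep_of_ne hne hne']
      exact σ.radius_le k hk
  untouched_or_merged k hk := by
    rcases mergeRep_cases σ.rep j j' k with ⟨h, -⟩ | ⟨h, hne, hne'⟩
    · rw [h, Function.update_self, Function.update_self, fibre_mergeRep_self hjj']
      exact Or.inr hn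
    · rw [h, Function.update_of_ne hne, Function.update_of_ne hne, fibre_mergeRep_of_ne hne hne']
      exact σ.untouched_or_merged k hk

theorem lt_merge (hj : j ∈ σ.reps) (hj' : j' ∈ σ.reps) (hjj' : j ≠ j') (z : ℂ)
    (hz : closedBall (σ.center j) (σ.radius j) ∪ closedBall (σ.center j') (σ.radius j') ⊆
      closedBall z (σ.radius j + σ.radius j'))
    (hn : ∃ n ∈ I, (closedBall z (σ.radius j + σ.radius j') ∩ K n).Nonempty ∧
      A.fibre σ.rep j ∪ A.fibre σ.rep j' ⊆ A.HSet (UKM (K n) (M n))) :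
    σ < σ.merge hj hj' hjj' z hz hn := by
  refine ⟨⟨fun k _ l _ he => by simp only [merge, mergeRep, he],
    fun k _ => σ.disk_subset_merged hz k⟩, fun hle => hjj' ?_⟩
  have := hle.1 j hj.1 j' hj'.1 (by simp [merge, mergeRep, hj.2, hj'.2, hjj'])
  rwa [hj.2, hj'.2] at this

theorem not_isMax_of_inter (hsum : A.RadSummable) (hadm : A.IsAdmissible I K M)
    (hcover : A.errorSet ⊆ ⋃ n ∈ I, K n) (hj : j ∈ σ.reps) (hj' : j' ∈ σ.reps) (hjj' : j ≠ j')
    (h : (σ.disk j ∩ σ.disk j').Nonempty) : ¬ IsMax σ := by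
  have hdisks : σ.disk j ∪ σ.disk j' =
      closedBall (σ.center j) (σ.radius j) ∪ closedBall (σ.center j') (σ.radius j') := by
    rw [σ.disk_of_mem_reps hj, σ.disk_of_mem_reps hj']
  obtain ⟨z, hz⟩ := exists_closedBall_superset_of_inter_nonempty
    (σ.radius_nonneg_of_mem_reps hj) (σ.radius_nonneg_of_mem_reps hj')
    (by rwa [← σ.disk_of_mem_reps hj, ← σ.disk_of_mem_reps hj'])
  obtain ⟨w, hw, hw'⟩ := h
  -- some `K_n` meets one of the two disks: otherwise both are untouched holes of `A`, and their
  -- common point `w` lies in the error set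
  obtain ⟨n, hn, hK, hwU⟩ : ∃ n ∈ I, ((σ.disk j ∪ σ.disk j') ∩ K n).Nonempty ∧
      w ∈ UKM (K n) (M n) := by
    by_cases hm : ∃ n ∈ I, ((σ.disk j ∪ σ.disk j') ∩ K n).Nonempty
    · obtain ⟨n, hn, x, hx, hxK⟩ := hm
      refine ⟨n, hn, ⟨x, hx, hxK⟩, ?_⟩
      rcases hx with hx | hx
      · exact σ.disk_subset_UKM_of_inter hsum hadm hj.1 hn ⟨x, hx, hxK⟩ hw
      · exact σ.disk_subset_UKM_of_inter hsum hadm hj'.1 hn ⟨x, hx, hxK⟩ hw'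
    · have hball : ∀ i ∈ σ.reps, σ.disk i ⊆ σ.disk j ∪ σ.disk j' →
          σ.disk i = closedBall (A.a i) (A.r i) := fun i hi hsub => by
        obtain ⟨-, -, hc, hr⟩ := σ.untouched_of_forall_not_inter hi.1 fun n hn hK =>
          hm ⟨n, hn, hK.mono (inter_subset_inter_left _ hsub)⟩
        rw [σ.disk_of_mem_reps hi, hc, hr]
      have hwE := A.mem_errorSet_of_mem_inter hj.1 hj'.1 hjj'
        ⟨hball j hj subset_union_left ▸ hw, hball j' hj' subset_union_right ▸ hw'⟩
      obtain ⟨n, hn, hwK⟩ := mem_iUnion₂.1 (hcover hwE)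
      exact absurd ⟨n, hn, w, Or.inl hw, hwK⟩ hm
  refine (σ.lt_merge hj hj' hjj' z hz ⟨n, hn, hK.mono (inter_subset_inter_left _ (hdisks ▸ hz)),
    union_subset ?_ ?_⟩).not_isMax
  · exact hj.2 ▸ σ.fibre_subset_HSet hsum hadm hj.1 hn ⟨w, hw, hwU⟩
  · exact hj'.2 ▸ σ.fibre_subset_HSet hsum hadm hj'.1 hn ⟨w, hw', hwU⟩

end

section Chain

variable {C : Set (Merging A I K M)} {σ : Merging A I K M} {l j : ℕ}

def SameClusterIn (C : Set (Merging A I K M)) (k l : ℕ) : Prop := ∃ σ ∈ C, σ.rep k = σ.rep l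

theorem SameClusterIn.symm (h : SameClusterIn C k l) : SameClusterIn C l k :=
  let ⟨σ, hσ, he⟩ := h
  ⟨σ, hσ, he.symm⟩

theorem SameClusterIn.trans (hC : IsChain (· ≤ ·) C) {m : ℕ} (hk : k ∈ A.sig) (hl : l ∈ A.sig)
    (hm : m ∈ A.sig) (h : SameClusterIn C k l) (h' : SameClusterIn C l m) :
    SameClusterIn C k m := by
  obtain ⟨σ, hσ, he⟩ := h
  obtain ⟨τ, hτ, he'⟩ := h'
  obtain ⟨υ, hυ, hσυ, hτυ⟩ := hC.directedOn σ hσ τ hτ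
  exact ⟨υ, hυ, (hσυ.1 k hk l hl he).trans (hτυ.1 l hl m hm he')⟩

/-- The clusters of the upper bound of a chain `C` are the unions of the clusters along `C`, each
represented by its least element. -/
noncomputable def limRep (C : Set (Merging A I K M)) (k : ℕ) : ℕ :=
  sInf {l | l ∈ A.sig ∧ SameClusterIn C k l}

theorem limRep_spec (hne : C.Nonempty) (hk : k ∈ A.sig) :
    limRep C k ∈ A.sig ∧ SameClusterIn C k (limRep C k) :=
  Nat.sInf_mem (s := {l | l ∈ A.sig ∧ SameClusterIn C k l}) ⟨k, hk, hne.some, hne.some_mem, rfl⟩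

theorem limRep_eq (hC : IsChain (· ≤ ·) C) (hk : k ∈ A.sig) (hl : l ∈ A.sig)
    (h : SameClusterIn C k l) : limRep C k = limRep C l := by
  unfold limRep
  congr 1
  ext m
  exact and_congr_right fun hm =>
    ⟨fun h' => h.symm.trans hC hl hk hm h', fun h' => h.trans hC hk hl hm h'⟩

theorem limRep_limRep (hC : IsChain (· ≤ ·) C) (hne : C.Nonempty) (hk : k ∈ A.sig) :
    limRep C (limRep C k) = limRep C k :=
  limRep_eq hC (limRep_spec hne hk).1 hk (limRep_spec hne hk).2.symm

theorem fibre_subset_fibre_limRep (hC : IsChain (· ≤ ·) C) (hσ : σ ∈ C) (hj : j ∈ A.sig) :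
    A.fibre σ.rep (σ.rep j) ⊆ A.fibre (limRep C) (limRep C j) :=
  fun _ hl => ⟨hl.1, limRep_eq hC hl.1 hj ⟨σ, hσ, hl.2⟩⟩

noncomputable def limRadius (C : Set (Merging A I K M)) (j : ℕ) : ℝ :=
  (⨆ σ ∈ C, ENNReal.ofReal (σ.radius (σ.rep j))).toReal

theorem radius_le_limRadius (hsum : A.RadSummable) (hj : j ∈ A.sig) (hσ : σ ∈ C) :
    σ.radius (σ.rep j) ≤ limRadius C j := by
  refine (ENNReal.ofReal_le_iff_le_toReal (ne_top_of_le_ne_top (radSumOn_ne_top hsum A.sig)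
    (iSup₂_le fun τ _ => τ.ofReal_radius_le_radSumOn_sig hj))).1 ?_
  exact le_iSup₂ (f := fun τ (_ : τ ∈ C) => ENNReal.ofReal (τ.radius (τ.rep j))) σ hσ

theorem ofReal_limRadius_le (hC : IsChain (· ≤ ·) C) (hne : C.Nonempty) (hk : k ∈ A.sig) :
    ENNReal.ofReal (limRadius C (limRep C k)) ≤
      A.radSumOn (A.fibre (limRep C) (limRep C k)) := by
  obtain ⟨hF, -⟩ := limRep_spec hne hk
  refine ENNReal.ofReal_toReal_le.trans (iSup₂_le fun σ hσ => (σ.radius_le _ hF).trans ?_)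
  refine radSumOn_mono ((fibre_subset_fibre_limRep hC hσ hF).trans_eq ?_)
  rw [limRep_limRep hC hne hk]

noncomputable def limCenter (C : Set (Merging A I K M)) (j : ℕ) : ℂ :=
  Classical.epsilon fun z => ∀ σ ∈ C, σ.disk j ⊆ closedBall z (limRadius C j)

theorem disk_subset_limDisk (hsum : A.RadSummable) (hC : IsChain (· ≤ ·) C) (hj : j ∈ A.sig)
    (hσ : σ ∈ C) : σ.disk j ⊆ closedBall (limCenter C j) (limRadius C j) := by
  have : Nonempty C := ⟨⟨σ, hσ⟩⟩
  obtain ⟨z, hz⟩ := exists_closedBall_superset_of_directed (ι := C)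
    (c := fun τ => τ.1.center (τ.1.rep j)) (fun τ => τ.1.radius_nonneg hj)
    (fun τ => radius_le_limRadius hsum hj τ.2) fun τ υ => by
      obtain ⟨ω, hω, hτω, hυω⟩ := hC.directedOn τ.1 τ.2 υ.1 υ.2
      exact ⟨⟨ω, hω⟩, hτω.2 j hj, hυω.2 j hj⟩
  exact Classical.epsilon_spec (p := fun z => ∀ σ ∈ C, σ.disk j ⊆ closedBall z (limRadius C j))
    ⟨z, fun τ hτ => hz ⟨τ, hτ⟩⟩ σ hσ

theorem disk_subset_limDisk_limRep (hsum : A.RadSummable) (hC : IsChain (· ≤ ·) C)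
    (hk : k ∈ A.sig) (hσ : σ ∈ C) :
    σ.disk k ⊆ closedBall (limCenter C (limRep C k)) (limRadius C (limRep C k)) := by
  obtain ⟨hF, τ, hτ, he⟩ := limRep_spec ⟨σ, hσ⟩ hk
  obtain ⟨υ, hυ, hσυ, hτυ⟩ := hC.directedOn σ hσ τ hτ
  calc σ.disk k ⊆ υ.disk k := hσυ.2 k hk
    _ = υ.disk (limRep C k) := υ.disk_eq_of_rep_eq (hτυ.1 k hk _ hF he)
    _ ⊆ _ := disk_subset_limDisk hsum hC hF hυ

theorem merged_limit (hsum : A.RadSummable) (hadm : A.IsAdmissible I K M)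
    (hC : IsChain (· ≤ ·) C) (hj : j ∈ A.sig) (hσ : σ ∈ C) (hn : n ∈ I)
    (hK : (σ.disk j ∩ K n).Nonempty) :
    (closedBall (limCenter C j) (limRadius C j) ∩ K n).Nonempty ∧
      A.fibre (limRep C) j ⊆ A.HSet (UKM (K n) (M n)) := by
  refine ⟨hK.mono (inter_subset_inter_left _ (disk_subset_limDisk hsum hC hj hσ)), fun l hl => ?_⟩
  obtain ⟨hFl, τ, hτ, he⟩ := limRep_spec ⟨σ, hσ⟩ hl.1
  obtain ⟨υ, hυ, hσυ, hτυ⟩ := hC.directedOn σ hσ τ hτ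
  have hυU : (υ.disk j ∩ UKM (K n) (M n)).Nonempty :=
    hK.mono (inter_subset_inter (hσυ.2 j hj) (subset_UKM (hadm.pos hn)))
  refine υ.fibre_subset_HSet hsum hadm hj hn hυU ⟨hl.1, ?_⟩
  rw [hτυ.1 l hl.1 _ hFl he, hl.2]

theorem untouched_limit (hsum : A.RadSummable) (hC : IsChain (· ≤ ·) C) (hne : C.Nonempty)
    (hj : j ∈ A.sig) (hFj : limRep C j = j) (hK : ∀ σ ∈ C, ∀ n ∈ I, ¬ (σ.disk j ∩ K n).Nonempty) :
    A.fibre (limRep C) j = {j} ∧ limCenter C j = A.a j ∧ limRadius C j = A.r j := by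
  have hunt := fun σ (hσ : σ ∈ C) => σ.untouched_of_forall_not_inter hj (hK σ hσ)
  obtain ⟨σ, hσ⟩ := hne
  have hrad : limRadius C j = A.r j := by
    have : ∀ τ ∈ C, ENNReal.ofReal (τ.radius (τ.rep j)) = ENNReal.ofReal (A.r j) :=
      fun τ hτ => by rw [(hunt τ hτ).1, (hunt τ hτ).2.2.2]
    rw [limRadius, biSup_congr this, biSup_const ⟨σ, hσ⟩, ENNReal.toReal_ofReal (A.r_nonneg j)]
  refine ⟨Subset.antisymm (fun l hl => ?_) (singleton_subset_iff.2 ⟨hj, hFj⟩), ?_, hrad⟩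
  · obtain ⟨-, τ, hτ, he⟩ := limRep_spec ⟨σ, hσ⟩ hl.1
    rw [← (hunt τ hτ).2.1]
    exact ⟨hl.1, by rw [he, hl.2, (hunt τ hτ).1]⟩
  · obtain ⟨hrep, -, hc, hr⟩ := hunt σ hσ
    have := dist_add_le_of_closedBall_subset_closedBall (σ.radius_nonneg hj)
      (disk_subset_limDisk hsum hC hj hσ)
    rw [hrep, hc, hr, hrad] at this
    exact (dist_le_zero.1 (by linarith)).symm

theorem untouched_or_merged_limit (hsum : A.RadSummable) (hadm : A.IsAdmissible I K M)
    (hC : IsChain (· ≤ ·) C) (hne : C.Nonempty) (hk : k ∈ A.sig) :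
    (A.fibre (limRep C) (limRep C k) = {limRep C k} ∧
        limCenter C (limRep C k) = A.a (limRep C k) ∧
        limRadius C (limRep C k) = A.r (limRep C k)) ∨
      ∃ n ∈ I, (closedBall (limCenter C (limRep C k)) (limRadius C (limRep C k)) ∩ K n).Nonempty ∧
        A.fibre (limRep C) (limRep C k) ⊆ A.HSet (UKM (K n) (M n)) := by
  obtain ⟨hj, -⟩ := limRep_spec hne hk
  by_cases hK : ∃ σ ∈ C, ∃ n ∈ I, (σ.disk (limRep C k) ∩ K n).Nonempty
  · obtain ⟨σ, hσ, n, hn, hσK⟩ := hK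
    exact Or.inr ⟨n, hn, merged_limit hsum hadm hC hj hσ hn hσK⟩
  · simp only [not_exists, not_and] at hK
    exact Or.inl (untouched_limit hsum hC hne hj (limRep_limRep hC hne hk) hK)

noncomputable def limit (hsum : A.RadSummable) (hadm : A.IsAdmissible I K M)
    (hC : IsChain (· ≤ ·) C) (hne : C.Nonempty) : Merging A I K M where
  rep := limRep C
  center := limCenter C
  radius := limRadius C
  rep_mem _ hk := (limRep_spec hne hk).1
  rep_rep _ hk := limRep_limRep hC hne hk
  closedBall_subset _ hk := (hne.some.closedBall_subset _ hk).trans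
    (disk_subset_limDisk_limRep hsum hC hk hne.some_mem)
  radius_le _ hk := ofReal_limRadius_le hC hne hk
  untouched_or_merged _ hk := untouched_or_merged_limit hsum hadm hC hne hk

theorem le_limit (hsum : A.RadSummable) (hadm : A.IsAdmissible I K M) (hC : IsChain (· ≤ ·) C)
    (hne : C.Nonempty) (hσ : σ ∈ C) : σ ≤ limit hsum hadm hC hne :=
  ⟨fun _ hk _ hl he => limRep_eq hC hk hl ⟨σ, hσ, he⟩,
    fun _ hk => disk_subset_limDisk_limRep hsum hC hk hσ⟩

theorem exists_isMax (hsum : A.RadSummable) (hadm : A.IsAdmissible I K M) :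
    ∃ σ : Merging A I K M, IsMax σ :=
  zorn_le_nonempty fun _ hC hne => ⟨limit hsum hadm hC hne, fun _ => le_limit hsum hadm hC hne⟩

end Chain

section

variable (σ : Merging A I K M) {j : ℕ}

/-- Index `0` carries the outer disk of `A`, the disk of a cluster sits at the index of its
representative, and all other radii are `0`. -/
noncomputable def toCheese : SwissCheese where
  a := Function.update σ.center 0 (A.a 0)
  r := Function.update (σ.reps.indicator σ.radius) 0 (A.r 0)
  r_nonneg k := by
    rcases eq_or_ne k 0 with rfl | hk
    · simpa using A.r_nonneg 0
    · rw [Function.update_of_ne hk]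
      exact indicator_nonneg (fun _ hj => σ.radius_nonneg_of_mem_reps hj) k

@[simp]
theorem toCheese_a_zero : σ.toCheese.a 0 = A.a 0 := by simp [toCheese]

@[simp]
theorem toCheese_r_zero : σ.toCheese.r 0 = A.r 0 := by simp [toCheese]

theorem toCheese_r_of_ne_zero (hj : j ≠ 0) : σ.toCheese.r j = σ.reps.indicator σ.radius j :=
  Function.update_of_ne hj ..

theorem toCheese_a_of_mem_sig (hj : j ∈ A.sig) : σ.toCheese.a j = σ.center j :=
  Function.update_of_ne (A.ne_zero_of_mem_sig hj) ..

theorem toCheese_r_of_mem_reps (hj : j ∈ σ.reps) : σ.toCheese.r j = σ.radius j :=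
  (σ.toCheese_r_of_ne_zero (A.ne_zero_of_mem_sig hj.1)).trans (indicator_of_mem hj _)

theorem closedBall_toCheese (hj : j ∈ σ.reps) :
    closedBall (σ.toCheese.a j) (σ.toCheese.r j) = σ.disk j := by
  rw [σ.toCheese_a_of_mem_sig hj.1, σ.toCheese_r_of_mem_reps hj, σ.disk_of_mem_reps hj]

theorem sig_toCheese : σ.toCheese.sig = σ.reps := by
  ext j
  refine ⟨fun ⟨hj1, hjpos⟩ => ?_, fun hj => ⟨hj.1.1, ?_⟩⟩
  · rw [σ.toCheese_r_of_ne_zero (Nat.one_le_iff_ne_zero.1 hj1)] at hjpos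
    exact mem_of_indicator_ne_zero hjpos.ne'
  · rw [σ.toCheese_r_of_mem_reps hj]
    exact hj.1.2.trans_le (σ.r_le_radius_of_mem_reps hj)

theorem rhoU_toCheese_le (hsum : A.RadSummable) (U : Set ℂ)
    (hU : ∀ j ∈ σ.reps, (σ.disk j ∩ U).Nonempty → A.fibre σ.rep j ⊆ A.HSet U) :
    Summable (fun j : σ.toCheese.HSet U => σ.toCheese.r j) ∧ σ.toCheese.rhoU U ≤ A.rhoU U := by
  have hreps : σ.toCheese.HSet U ⊆ σ.reps := fun j hj => σ.sig_toCheese ▸ hj.1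
  refine summable_and_tsum_le_of_tsum_ofReal_le (fun _ => σ.toCheese.r_nonneg _)
    (fun _ => A.r_nonneg _) ((A.summable_r hsum).subtype _) ?_
  calc ∑' j : σ.toCheese.HSet U, ENNReal.ofReal (σ.toCheese.r j)
      = ∑' j : σ.toCheese.HSet U, ENNReal.ofReal (σ.radius j) :=
        tsum_congr fun j => by rw [σ.toCheese_r_of_mem_reps (hreps j.2)]
    _ ≤ A.radSumOn (A.HSet U) := σ.tsum_radius_le hreps fun j hj =>
        hU j (hreps hj) (σ.closedBall_toCheese (hreps hj) ▸ hj.2)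

theorem rhoU_univ_toCheese_le (hsum : A.RadSummable) :
    Summable (fun j : σ.toCheese.HSet univ => σ.toCheese.r j) ∧
      σ.toCheese.rhoU univ ≤ A.rhoU univ :=
  σ.rhoU_toCheese_le hsum univ fun _ _ _ _ hl => A.HSet_univ ▸ hl.1

theorem radSummable_toCheese (hsum : A.RadSummable) : σ.toCheese.RadSummable := by
  rw [radSummable_iff, ← HSet_univ]
  exact (σ.rhoU_univ_toCheese_le hsum).1

theorem disc_le_disc_toCheese (hsum : A.RadSummable) : A.disc ≤ σ.toCheese.disc := by
  simp only [disc, toCheese_r_zero, radSum_eq_rhoU_univ]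
  linarith [(σ.rhoU_univ_toCheese_le hsum).2]

theorem cheeseSet_toCheese_subset : σ.toCheese.cheeseSet ⊆ A.cheeseSet := by
  rintro x ⟨hx0, hx⟩
  refine ⟨by simpa using hx0, fun hxA => hx ?_⟩
  obtain ⟨k, hk1, hxk⟩ := mem_iUnion₂.1 hxA
  have hk : k ∈ A.sig := ⟨hk1, nonempty_ball.1 ⟨x, hxk⟩⟩
  have hrep := σ.rep_mem_reps hk
  refine mem_iUnion₂.2 ⟨σ.rep k, hrep.1.1, ?_⟩
  rw [σ.toCheese_a_of_mem_sig hrep.1, σ.toCheese_r_of_mem_reps hrep]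
  refine ball_subset_ball' ?_ hxk
  linarith [dist_add_le_of_closedBall_subset_closedBall (A.r_nonneg k) (σ.closedBall_subset k hk)]

theorem isClassical_toCheese (hsum : A.RadSummable) (hadm : A.IsAdmissible I K M)
    (hcover : A.errorSet ⊆ ⋃ n ∈ I, K n) (hI : I.Nonempty) (hσ : IsMax σ) :
    σ.toCheese.IsClassical := by
  refine ⟨σ.radSummable_toCheese hsum, by simpa using hadm.r_zero_pos hI, fun k hk => ?_⟩
  rw [sig_toCheese] at hk
  rw [σ.closedBall_toCheese hk, toCheese_a_zero, toCheese_r_zero]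
  refine ⟨σ.disk_subset_ball hsum hadm hcover hk.1, fun l hl hlk => ?_⟩
  rw [sig_toCheese] at hl
  rw [σ.closedBall_toCheese hl, ← not_nonempty_iff_eq_empty]
  exact fun h => σ.not_isMax_of_inter hsum hadm hcover hk hl hlk.symm h hσ

theorem exists_ball_toCheese_eq (hsum : A.RadSummable) (hadm : A.IsAdmissible I K M)
    (hk : k ∈ A.sig) (hkU : k ∉ ⋃ n ∈ I, A.HSet (UKM (K n) (M n))) :
    ∃ l ∈ σ.toCheese.sig, ball (σ.toCheese.a l) (σ.toCheese.r l) = ball (A.a k) (A.r k) := by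
  obtain ⟨hrep, -, hc, hr⟩ := σ.untouched_of_forall_not_inter hk fun n hn hK =>
    hkU (mem_iUnion₂.2 ⟨n, hn, σ.fibre_subset_HSet hsum hadm hk hn
      (hK.mono (inter_subset_inter_right _ (subset_UKM (hadm.pos hn)))) (σ.mem_fibre_rep hk)⟩)
  have hreps : k ∈ σ.reps := ⟨hk, hrep⟩
  refine ⟨k, σ.sig_toCheese ▸ hreps, ?_⟩
  rw [σ.toCheese_a_of_mem_sig hk, σ.toCheese_r_of_mem_reps hreps, hc, hr]

theorem rhoU_toCheese_UKM_le (hsum : A.RadSummable) (hadm : A.IsAdmissible I K M) (hn : n ∈ I) :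
    σ.toCheese.rhoU (UKM (K n) (M n)) ≤ A.rhoU (UKM (K n) (M n)) :=
  (σ.rhoU_toCheese_le hsum _ fun _ hj hU => hj.2 ▸ σ.fibre_subset_HSet hsum hadm hj.1 hn hU).2

end

end Merging

end SwissCheese

theorem stmt_11_general (A : SwissCheese) (hsum : A.RadSummable)
    (I : Set ℕ) (hI : I.Nonempty) (K : ℕ → Set ℂ) (M : ℕ → ℝ)
    (hadm₁ : ∀ n ∈ I, A.rhoU (UKM (K n) (M n)) < M n / 2)
    (hadm₂ : ∀ m ∈ I, ∀ n ∈ I, m ≠ n → UKM (K m) (M m) ∩ UKM (K n) (M n) = ∅)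
    (hadm₃ : ∀ n ∈ I, closure (UKM (K n) (M n)) ⊆ Metric.ball (A.a 0) (A.r 0))
    (hcover : A.errorSet ⊆ ⋃ n ∈ I, K n) :
    ∃ B : SwissCheese, B.IsClassical ∧ A.disc ≤ B.disc ∧ B.cheeseSet ⊆ A.cheeseSet ∧
      (∀ k ∈ A.sig, k ∉ (⋃ n ∈ I, A.HSet (UKM (K n) (M n))) →
        ∃ l ∈ B.sig, Metric.ball (B.a l) (B.r l) = Metric.ball (A.a k) (A.r k)) ∧
      ∀ n ∈ I, B.rhoU (UKM (K n) (M n)) ≤ A.rhoU (UKM (K n) (M n)) := by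
  have hadm : A.IsAdmissible I K M := ⟨hadm₁, hadm₂, hadm₃⟩
  obtain ⟨σ, hσ⟩ := SwissCheese.Merging.exists_isMax hsum hadm
  exact ⟨σ.toCheese, σ.isClassical_toCheese hsum hadm hcover hI hσ, σ.disc_le_disc_toCheese hsum,
    σ.cheeseSet_toCheese_subset, fun _ hk hkU => σ.exists_ball_toCheese_eq hsum hadm hk hkU,
    fun _ hn => σ.rhoU_toCheese_UKM_le hsum hadm hn⟩

/-- Controlled classicalisation theorem. -/
theorem stmt_11 (A : SwissCheese) (hrf : A.IsRedundancyFree) (hsum : A.RadSummable)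
    (I : Set ℕ) (hI : I.Nonempty) (K : ℕ → Set ℂ) (M : ℕ → ℝ)
    (hKne : ∀ n ∈ I, (K n).Nonempty) (hKc : ∀ n ∈ I, IsCompact (K n))
    (hM : ∀ n ∈ I, 0 < M n)
    (hadm₁ : ∀ n ∈ I, A.rhoU (UKM (K n) (M n)) < M n / 2)
    (hadm₂ : ∀ m ∈ I, ∀ n ∈ I, m ≠ n → UKM (K m) (M m) ∩ UKM (K n) (M n) = ∅)
    (hadm₃ : ∀ n ∈ I, closure (UKM (K n) (M n)) ⊆ Metric.ball (A.a 0) (A.r 0))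
    (hcover : A.errorSet ⊆ ⋃ n ∈ I, K n) :
    ∃ B : SwissCheese, B.IsClassical ∧ A.disc ≤ B.disc ∧ B.cheeseSet ⊆ A.cheeseSet ∧
      (∀ k ∈ A.sig, k ∉ (⋃ n ∈ I, A.HSet (UKM (K n) (M n))) →
        ∃ l ∈ B.sig, Metric.ball (B.a l) (B.r l) = Metric.ball (A.a k) (A.r k)) ∧
      ∀ n ∈ I, B.rhoU (UKM (K n) (M n)) ≤ A.rhoU (UKM (K n) (M n)) :=
  stmt_11_general A hsum I hI K M hadm₁ hadm₂ hadm₃ hcover
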